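/- arXiv:1709.04988 — 4 statements merged into one kernel-verified Lean document; each statement's English description precedes it below -/
import Mathlib

section
/- Let γ evolve by the vortex filament equation ∂_t γ = κB with Frenet frame (T,N,B), curvature κ > 0 and torsion τ. Then the curvature satisfies the evolution equation ∂_t κ = -(2 κ_s τ + τ_s κ). -/
open Real
open scoped ContDiff

variable {E : Type*} [NormedAddCommGroup E] [NormedSpace ℝ E]

lemma slice1_hasDerivAt (f : ℝ × ℝ → E) (hf : ContDiff ℝ ∞ f) (s t : ℝ) :
    HasDerivAt (fun s' => f (s', t)) (fderiv ℝ f (s, t) (1, 0)) s := by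
  have h1 : HasDerivAt (fun s' : ℝ => (s', t)) ((1 : ℝ), (0 : ℝ)) s :=
    (hasDerivAt_id s).prodMk (hasDerivAt_const s t)
  exact ((hf.differentiable (by simp)) (s, t)).hasFDerivAt.comp_hasDerivAt s h1

lemma slice2_hasDerivAt (f : ℝ × ℝ → E) (hf : ContDiff ℝ ∞ f) (s t : ℝ) :
    HasDerivAt (fun t' => f (s, t')) (fderiv ℝ f (s, t) (0, 1)) t := by
  have h1 : HasDerivAt (fun t' : ℝ => (s, t')) ((0 : ℝ), (1 : ℝ)) t :=
    (hasDerivAt_const t s).prodMk (hasDerivAt_id t)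
  exact ((hf.differentiable (by simp)) (s, t)).hasFDerivAt.comp_hasDerivAt t h1

lemma partial_smooth (f : ℝ × ℝ → E) (hf : ContDiff ℝ ∞ f) (v : ℝ × ℝ) :
    ContDiff ℝ ∞ (fun p => fderiv ℝ f p v) := by
  have h1 : ContDiff ℝ ∞ (fderiv ℝ f) := hf.fderiv_right (by exact_mod_cast le_refl _)
  exact (ContinuousLinearMap.apply ℝ E v).contDiff.comp h1

lemma mixed_symm (f : ℝ × ℝ → E) (hf : ContDiff ℝ ∞ f) (s t : ℝ) :
    deriv (fun t' => deriv (fun s' => f (s', t')) s) t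
      = deriv (fun s' => deriv (fun t' => f (s', t')) t) s := by
  have hdf : Differentiable ℝ (fderiv ℝ f) :=
    (hf.fderiv_right (m := ∞) (by exact_mod_cast le_refl _)).differentiable (by simp)
  have hsym : ∀ v w, fderiv ℝ (fderiv ℝ f) (s, t) v w = fderiv ℝ (fderiv ℝ f) (s, t) w v :=
    second_derivative_symmetric (fun y => ((hf.differentiable (by simp)) y).hasFDerivAt)
      (hdf (s, t)).hasFDerivAt
  have e1 : (fun t' => deriv (fun s' => f (s', t')) s)
      = fun t' => (fun p => fderiv ℝ f p (1, 0)) (s, t') := by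
    funext t'
    exact (slice1_hasDerivAt f hf s t').deriv
  have e2 : (fun s' => deriv (fun t' => f (s', t')) t)
      = fun s' => (fun p => fderiv ℝ f p (0, 1)) (s', t) := by
    funext s'
    exact (slice2_hasDerivAt f hf s' t).deriv
  rw [e1, e2,
    (slice2_hasDerivAt _ (partial_smooth f hf (1, 0)) s t).deriv,
    (slice1_hasDerivAt _ (partial_smooth f hf (0, 1)) s t).deriv]
  have key : ∀ v w : ℝ × ℝ, fderiv ℝ (fun p => fderiv ℝ f p v) (s, t) w
      = fderiv ℝ (fderiv ℝ f) (s, t) w v := by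
    intro v w
    have : HasFDerivAt (fun p => fderiv ℝ f p v)
        ((ContinuousLinearMap.apply ℝ E v).comp (fderiv ℝ (fderiv ℝ f) (s, t))) (s, t) :=
      (ContinuousLinearMap.apply ℝ E v).hasFDerivAt.comp (s, t) (hdf (s, t)).hasFDerivAt
    rw [this.fderiv]; rfl
  rw [key, key, hsym]

/-- For the vortex filament equation `∂ₜγ = κB` (arclength parameter `s`), the
curvature evolves by `∂ₜκ = -(2κ_s τ + τ_s κ)`. -/
theorem vfe_curvature_evolution
    (γ T N B : ℝ → ℝ → EuclideanSpace ℝ (Fin 3)) (κ τ : ℝ → ℝ → ℝ)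
    (hsmooth : ContDiff ℝ (⊤ : ℕ∞) (fun p : ℝ × ℝ => γ p.1 p.2))
    (hκsmooth : ContDiff ℝ (⊤ : ℕ∞) (fun p : ℝ × ℝ => κ p.1 p.2))
    (hτsmooth : ContDiff ℝ (⊤ : ℕ∞) (fun p : ℝ × ℝ => τ p.1 p.2))
    (hκpos : ∀ s t, 0 < κ s t)
    (hT : ∀ s t, deriv (fun s' => γ s' t) s = T s t)
    (hTunit : ∀ s t, ‖T s t‖ = 1)
    (hNunit : ∀ s t, ‖N s t‖ = 1) (hBunit : ∀ s t, ‖B s t‖ = 1)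
    (hTN : ∀ s t, inner ℝ (T s t) (N s t) = (0 : ℝ))
    (hTB : ∀ s t, inner ℝ (T s t) (B s t) = (0 : ℝ))
    (hNB : ∀ s t, inner ℝ (N s t) (B s t) = (0 : ℝ))
    (hFrenetT : ∀ s t, deriv (fun s' => T s' t) s = κ s t • N s t)
    (hFrenetN : ∀ s t, deriv (fun s' => N s' t) s = -(κ s t) • T s t + τ s t • B s t)
    (hFrenetB : ∀ s t, deriv (fun s' => B s' t) s = -(τ s t) • N s t)
    (hflow : ∀ s t, deriv (fun t' => γ s t') t = κ s t • B s t)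
    (hTt : ∀ s t, deriv (fun t' => T s t') t = deriv (fun s' => κ s' t • B s' t) s) :
    ∀ s t, deriv (fun t' => κ s t') t
      = -(2 * deriv (fun s' => κ s' t) s * τ s t + deriv (fun s' => τ s' t) s * κ s t) := by
  intro s t
  have hγ2 : ContDiff ℝ ∞ (fun p : ℝ × ℝ => γ p.1 p.2) := hsmooth.of_le (by simp)
  have hκ2 : ContDiff ℝ ∞ (fun p : ℝ × ℝ => κ p.1 p.2) := hκsmooth.of_le (by simp)
  have hτ2 : ContDiff ℝ ∞ (fun p : ℝ × ℝ => τ p.1 p.2) := hτsmooth.of_le (by simp)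
  -- smoothness of one-variable slices in `s` at fixed `t`
  have hk : ContDiff ℝ ∞ (fun s' => κ s' t) := hκ2.comp (contDiff_id.prodMk contDiff_const)
  have htor : ContDiff ℝ ∞ (fun s' => τ s' t) := hτ2.comp (contDiff_id.prodMk contDiff_const)
  -- `g s' = ∂ₜ γ (s', t)` is smooth in `s'`
  have hg_eq : (fun s' => deriv (fun t' => γ s' t') t)
      = fun s' => fderiv ℝ (fun p : ℝ × ℝ => γ p.1 p.2) (s', t) (0, 1) := by
    funext s'
    exact (slice2_hasDerivAt _ hγ2 s' t).deriv
  have hg : ContDiff ℝ ∞ (fun s' => deriv (fun t' => γ s' t') t) := by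
    rw [hg_eq]
    exact (partial_smooth _ hγ2 (0, 1)).comp (contDiff_id.prodMk contDiff_const)
  -- `B` is smooth in `s`
  have hbfun : (fun s' => B s' t) = fun s' => (κ s' t)⁻¹ • deriv (fun t' => γ s' t') t := by
    funext s'
    rw [hflow, smul_smul, inv_mul_cancel₀ (hκpos s' t).ne', one_smul]
  have hb : ContDiff ℝ ∞ (fun s' => B s' t) := by
    rw [hbfun]
    exact (hk.inv fun x => (hκpos x t).ne').smul hg
  -- `T` is smooth in `s`
  have hTfun : (fun s' => T s' t)
      = fun s' => fderiv ℝ (fun p : ℝ × ℝ => γ p.1 p.2) (s', t) (1, 0) := by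
    funext s'
    rw [← hT s' t]
    exact (slice1_hasDerivAt _ hγ2 s' t).deriv
  have hTf : ContDiff ℝ ∞ (fun s' => T s' t) := by
    rw [hTfun]
    exact (partial_smooth _ hγ2 (1, 0)).comp (contDiff_id.prodMk contDiff_const)
  -- `N` is smooth in `s`
  have hnfun : (fun s' => N s' t)
      = fun s' => (κ s' t)⁻¹ • deriv (fun s'' => T s'' t) s' := by
    funext s'
    rw [hFrenetT, smul_smul, inv_mul_cancel₀ (hκpos s' t).ne', one_smul]
  have hn : ContDiff ℝ ∞ (fun s' => N s' t) := by
    rw [hnfun]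
    exact (hk.inv fun x => (hκpos x t).ne').smul (contDiff_infty_iff_deriv.mp hTf).2
  -- HasDerivAt facts
  have hbHas : ∀ x, HasDerivAt (fun s' => B s' t) (-(τ x t) • N x t) x := by
    intro x
    have h := (hb.differentiable (by simp) x).hasDerivAt
    rwa [hFrenetB x t] at h
  have hnHas : ∀ x, HasDerivAt (fun s' => N s' t) (-(κ x t) • T x t + τ x t • B x t) x := by
    intro x
    have h := (hn.differentiable (by simp) x).hasDerivAt
    rwa [hFrenetN x t] at h
  have hkHas : ∀ x, HasDerivAt (fun s' => κ s' t) (deriv (fun s' => κ s' t) x) x :=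
    fun x => (hk.differentiable (by simp) x).hasDerivAt
  have htorHas : ∀ x, HasDerivAt (fun s' => τ s' t) (deriv (fun s' => τ s' t) x) x :=
    fun x => (htor.differentiable (by simp) x).hasDerivAt
  have hk'Has : HasDerivAt (deriv (fun s' => κ s' t)) (deriv (deriv (fun s' => κ s' t)) s) s :=
    (((contDiff_infty_iff_deriv.mp hk).2).differentiable (by simp) s).hasDerivAt
  -- first s-derivative of κ•B
  have hu : ∀ x, deriv (fun s' => κ s' t • B s' t) x
      = deriv (fun s' => κ s' t) x • B x t - (κ x t * τ x t) • N x t := by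
    intro x
    rw [HasDerivAt.deriv (f := fun s' => κ s' t • B s' t) ((hkHas x).smul (hbHas x))]
    module
  -- second s-derivative of κ•B
  set k' : ℝ := deriv (fun s' => κ s' t) s with hk'def
  set k'' : ℝ := deriv (deriv (fun s' => κ s' t)) s with hk''def
  set tor' : ℝ := deriv (fun s' => τ s' t) s with htor'def
  set V : EuclideanSpace ℝ (Fin 3) :=
    (k'' • B s t + k' • (-(τ s t) • N s t))
      - ((k' * τ s t + κ s t * tor') • N s t
          + (κ s t * τ s t) • (-(κ s t) • T s t + τ s t • B s t)) with hVdef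
  have hMhas : HasDerivAt (fun s' => deriv (fun s'' => κ s'' t) s' • B s' t - (κ s' t * τ s' t) • N s' t) _ s :=
    (hk'Has.smul (hbHas s)).sub (((hkHas s).mul (htorHas s)).smul (hnHas s))
  have hM : deriv (fun s' => deriv (fun s'' => κ s'' t • B s'' t) s') s = V := by
    rw [show (fun s' => deriv (fun s'' => κ s'' t • B s'' t) s')
        = fun s' => deriv (fun s'' => κ s'' t) s' • B s' t - (κ s' t * τ s' t) • N s' t
      from funext hu]
    rw [hMhas.deriv, hVdef, Pi.mul_apply]
    module
  -- inner product of V with N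
  have hNN : inner ℝ (N s t) (N s t) = (1 : ℝ) := by
    rw [real_inner_self_eq_norm_sq, hNunit]; norm_num
  have hBN : inner ℝ (B s t) (N s t) = (0 : ℝ) := by rw [real_inner_comm]; exact hNB s t
  have hTNs : inner ℝ (T s t) (N s t) = (0 : ℝ) := hTN s t
  have hVN : inner ℝ V (N s t) = -(2 * k' * τ s t + κ s t * tor') := by
    rw [hVdef]
    simp only [inner_sub_left, inner_add_left, inner_smul_left, real_inner_smul_left,
      hNN, hBN, hTNs, RCLike.inner_apply, conj_trivial]
    ring
  -- smoothness of T jointly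
  have hT2 : ContDiff ℝ ∞ (fun p : ℝ × ℝ => T p.1 p.2) := by
    rw [show (fun p : ℝ × ℝ => T p.1 p.2)
        = fun p => fderiv ℝ (fun p : ℝ × ℝ => γ p.1 p.2) p (1, 0) from funext fun p => by
      rw [← hT p.1 p.2]; exact (slice1_hasDerivAt _ hγ2 p.1 p.2).deriv]
    exact partial_smooth _ hγ2 (1, 0)
  -- mixed partials of T commute
  have hmix : deriv (fun t' => deriv (fun s' => T s' t') s) t
      = deriv (fun s' => deriv (fun t' => T s' t') t) s :=
    mixed_symm (fun p : ℝ × ℝ => T p.1 p.2) hT2 s t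
  -- rewrite rhs using hTt
  have hrhs : deriv (fun s' => deriv (fun t' => T s' t') t) s = V := by
    rw [show (fun s' => deriv (fun t' => T s' t') t)
        = fun s' => deriv (fun s'' => κ s'' t • B s'' t) s' from funext fun s' => hTt s' t]
    exact hM
  -- lhs: derivative in t of κ • N
  have hktHas : HasDerivAt (fun t' => κ s t') (deriv (fun t' => κ s t') t) t :=
    ((hκ2.comp (contDiff_const.prodMk contDiff_id)).differentiable (by simp) t).hasDerivAt
  have hntfun : (fun t' => N s t')
      = fun t' => (κ s t')⁻¹ • fderiv ℝ (fun p : ℝ × ℝ => T p.1 p.2) (s, t') (1, 0) := by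
    funext t'
    rw [← (slice1_hasDerivAt _ hT2 s t').deriv, hFrenetT, smul_smul,
      inv_mul_cancel₀ (hκpos s t').ne', one_smul]
  have hnt : ContDiff ℝ ∞ (fun t' => N s t') := by
    rw [hntfun]
    exact ((hκ2.comp (contDiff_const.prodMk contDiff_id)).inv fun x => (hκpos s x).ne').smul
      ((partial_smooth _ hT2 (1, 0)).comp (contDiff_const.prodMk contDiff_id))
  have hntHas : HasDerivAt (fun t' => N s t') (deriv (fun t' => N s t') t) t :=
    (hnt.differentiable (by simp) t).hasDerivAt
  have hlhs : deriv (fun t' => deriv (fun s' => T s' t') s) t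
      = deriv (fun t' => κ s t') t • N s t + κ s t • deriv (fun t' => N s t') t := by
    rw [show (fun t' => deriv (fun s' => T s' t') s)
        = fun t' => κ s t' • N s t' from funext fun t' => hFrenetT s t']
    rw [HasDerivAt.deriv (f := fun t' => κ s t' • N s t') (hktHas.smul hntHas)]
    module
  -- ⟨N_t, N⟩ = 0
  have hNtN : inner ℝ (deriv (fun t' => N s t')  t) (N s t) = (0 : ℝ) := by
    have h1 : HasDerivAt (fun t' => (inner ℝ (N s t') (N s t') : ℝ))
        (inner ℝ (N s t) (deriv (fun t' => N s t') t)
          + inner ℝ (deriv (fun t' => N s t') t) (N s t)) t :=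
      HasDerivAt.inner ℝ hntHas hntHas
    have h2 : (fun t' => (inner ℝ (N s t') (N s t') : ℝ)) = fun _ => (1 : ℝ) := by
      funext t'
      rw [real_inner_self_eq_norm_sq, hNunit]; norm_num
    have h3 := h1.deriv
    rw [h2, deriv_const] at h3
    have h4 : inner ℝ (N s t) (deriv (fun t' => N s t') t)
        = inner ℝ (deriv (fun t' => N s t') t) (N s t) := real_inner_comm _ _
    rw [h4] at h3
    linarith
  -- conclude
  have hfinal : inner ℝ (deriv (fun t' => deriv (fun s' => T s' t') s) t) (N s t)
      = deriv (fun t' => κ s t') t := by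
    rw [hlhs, inner_add_left, real_inner_smul_left, real_inner_smul_left, hNN, hNtN]
    ring
  have := hfinal.symm.trans (by rw [hmix, hrhs, hVN])
  rw [this]
  ring
end

section
/- Under the Hasimoto transform, if γ solves the vortex filament equation with curvature κ and torsion τ, then ψ(s,t) = κ(s,t)·exp(i∫₀ˢ τ(σ,t) dσ) satisfies the nonlinear cubic Schrödinger equation (1/i)∂_t ψ = ∂_ss ψ + (1/2)(|ψ|² + A(t))ψ for some real function A(t). -/
open Real Complex

noncomputable section HasimotoHelpers

local notation "E3" => EuclideanSpace ℝ (Fin 3)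
local notation "⟪" x ", " y "⟫" => @inner ℝ _ _ x y

variable {G : Type*} [NormedAddCommGroup G] [NormedSpace ℝ G]

/-- first partial derivative of a function of two real variables -/
def pd1 (f : ℝ × ℝ → G) (p : ℝ × ℝ) : G := fderiv ℝ f p (1, 0)
/-- second partial derivative of a function of two real variables -/
def pd2 (f : ℝ × ℝ → G) (p : ℝ × ℝ) : G := fderiv ℝ f p (0, 1)

theorem hasDerivAt_pd1 {f : ℝ × ℝ → G} (hf : ContDiff ℝ (⊤ : ℕ∞) f) (p : ℝ × ℝ) :
    HasDerivAt (fun x => f (x, p.2)) (pd1 f p) p.1 := by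
  have h1 : HasFDerivAt f (fderiv ℝ f p) p :=
    (hf.differentiable (by simp) p).hasFDerivAt
  have h2 : HasDerivAt (fun x : ℝ => (x, p.2)) ((1 : ℝ), (0 : ℝ)) p.1 := by
    simpa using (hasDerivAt_id p.1).prodMk (hasDerivAt_const p.1 p.2)
  simpa [pd1, Function.comp_def] using (h1.comp_hasDerivAt p.1 h2 :)

theorem hasDerivAt_pd2 {f : ℝ × ℝ → G} (hf : ContDiff ℝ (⊤ : ℕ∞) f) (p : ℝ × ℝ) :
    HasDerivAt (fun y => f (p.1, y)) (pd2 f p) p.2 := by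
  have h1 : HasFDerivAt f (fderiv ℝ f p) p :=
    (hf.differentiable (by simp) p).hasFDerivAt
  have h2 : HasDerivAt (fun y : ℝ => (p.1, y)) ((0 : ℝ), (1 : ℝ)) p.2 := by
    simpa using (hasDerivAt_const p.2 p.1).prodMk (hasDerivAt_id p.2)
  simpa [pd2, Function.comp_def] using (h1.comp_hasDerivAt p.2 h2 :)

theorem contDiff_pd1 {f : ℝ × ℝ → G} (hf : ContDiff ℝ (⊤ : ℕ∞) f) : ContDiff ℝ (⊤ : ℕ∞) (pd1 f) :=
  (hf.fderiv_right (by simp)).clm_apply contDiff_const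

theorem contDiff_pd2 {f : ℝ × ℝ → G} (hf : ContDiff ℝ (⊤ : ℕ∞) f) : ContDiff ℝ (⊤ : ℕ∞) (pd2 f) :=
  (hf.fderiv_right (by simp)).clm_apply contDiff_const

theorem pd_comm {f : ℝ × ℝ → G} (hf : ContDiff ℝ (⊤ : ℕ∞) f) (p : ℝ × ℝ) :
    pd1 (pd2 f) p = pd2 (pd1 f) p := by
  have hdf : ContDiff ℝ (⊤ : ℕ∞) (fderiv ℝ f) := hf.fderiv_right (by simp)
  have h1 : ∀ q, HasFDerivAt f (fderiv ℝ f q) q := fun q =>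
    (hf.differentiable (by simp) q).hasFDerivAt
  have h2 : HasFDerivAt (fderiv ℝ f) (fderiv ℝ (fderiv ℝ f) p) p :=
    (hdf.differentiable (by simp) p).hasFDerivAt
  have hsymm := second_derivative_symmetric h1 h2 (0, 1) (1, 0)
  have e1 : pd1 (pd2 f) p = fderiv ℝ (fderiv ℝ f) p (1, 0) (0, 1) := by
    show fderiv ℝ (fun q => fderiv ℝ f q (0,1)) p (1,0) = _
    rw [fderiv_clm_apply (hdf.differentiable (by simp) p) (differentiableAt_const _)]
    simp
  have e2 : pd2 (pd1 f) p = fderiv ℝ (fderiv ℝ f) p (0, 1) (1, 0) := by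
    show fderiv ℝ (fun q => fderiv ℝ f q (1,0)) p (0,1) = _
    rw [fderiv_clm_apply (hdf.differentiable (by simp) p) (differentiableAt_const _)]
    simp
  rw [e1, e2, hsymm]

/-- transfer `pd1` to a curried two-variable function -/
theorem transfer1 {f : ℝ × ℝ → G} (hf : ContDiff ℝ (⊤ : ℕ∞) f) {g : ℝ → ℝ → G}
    (he : ∀ s t, f (s, t) = g s t) (s t : ℝ) :
    HasDerivAt (fun s' => g s' t) (pd1 f (s, t)) s := by
  have h := hasDerivAt_pd1 hf (s, t)
  have he' : (fun x => f (x, t)) = fun x => g x t := funext fun x => he x t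
  rwa [he'] at h

theorem transfer2 {f : ℝ × ℝ → G} (hf : ContDiff ℝ (⊤ : ℕ∞) f) {g : ℝ → ℝ → G}
    (he : ∀ s t, f (s, t) = g s t) (s t : ℝ) :
    HasDerivAt (fun t' => g s t') (pd2 f (s, t)) t := by
  have h := hasDerivAt_pd2 hf (s, t)
  have he' : (fun y => f (s, y)) = fun y => g s y := funext fun y => he s y
  rwa [he'] at h

theorem expand_basis {T N B : E3}
    (hTu : ‖T‖ = 1) (hNu : ‖N‖ = 1) (hBu : ‖B‖ = 1)
    (hTN : ⟪T, N⟫ = 0) (hTB : ⟪T, B⟫ = 0) (hNB : ⟪N, B⟫ = 0) (v : E3) :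
    v = ⟪T, v⟫ • T + ⟪N, v⟫ • N + ⟪B, v⟫ • B := by
  have hTT : ⟪T, T⟫ = 1 := by rw [real_inner_self_eq_norm_mul_norm, hTu]; ring
  have hNN : ⟪N, N⟫ = 1 := by rw [real_inner_self_eq_norm_mul_norm, hNu]; ring
  have hBB : ⟪B, B⟫ = 1 := by rw [real_inner_self_eq_norm_mul_norm, hBu]; ring
  have hNT : ⟪N, T⟫ = 0 := by rw [real_inner_comm]; exact hTN
  have hBT : ⟪B, T⟫ = 0 := by rw [real_inner_comm]; exact hTB
  have hBN : ⟪B, N⟫ = 0 := by rw [real_inner_comm]; exact hNB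
  set b : Fin 3 → E3 := ![T, N, B] with hb
  have hon : Orthonormal ℝ b := by
    rw [orthonormal_iff_ite]
    intro i j
    fin_cases i <;> fin_cases j <;>
      simp only [hb, Matrix.cons_val_zero, Matrix.cons_val_one, Matrix.head_cons,
        Matrix.cons_val_two, Matrix.tail_cons, Fin.zero_eta, Fin.mk_one, Fin.reduceEq,
        Fin.isValue, reduceIte, Fin.mk.injEq, Nat.succ_ne_zero, if_true, if_false,
        Nat.zero_ne_one, Nat.one_ne_zero, OfNat.ofNat_ne_one, OfNat.ofNat_ne_zero,
        OfNat.one_ne_ofNat, OfNat.zero_ne_ofNat] <;>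
      assumption
  have hcard : Fintype.card (Fin 3) = Module.finrank ℝ E3 := by simp
  let ob : OrthonormalBasis (Fin 3) ℝ E3 :=
    (basisOfOrthonormalOfCardEqFinrank hon hcard).toOrthonormalBasis
      (by rwa [coe_basisOfOrthonormalOfCardEqFinrank])
  have hob : ⇑ob = b := by
    simp only [ob, Module.Basis.coe_toOrthonormalBasis, coe_basisOfOrthonormalOfCardEqFinrank]
  have hsum := ob.sum_repr' v
  rw [hob] at hsum
  refine hsum.symm.trans ?_
  simp only [hb, Fin.sum_univ_three, Matrix.cons_val_zero, Matrix.cons_val_one, Matrix.head_cons,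
    Matrix.cons_val_two, Matrix.tail_cons]

/-- derivative of a constant inner product -/
theorem deriv_inner_const {f g : ℝ → E3} {f' g' : E3} {x : ℝ} {c : ℝ}
    (hf : HasDerivAt f f' x) (hg : HasDerivAt g g' x) (h : ∀ y, ⟪f y, g y⟫ = c) :
    ⟪f x, g'⟫ + ⟪f', g x⟫ = 0 := by
  have h1 : HasDerivAt (fun y => ⟪f y, g y⟫) (⟪f x, g'⟫ + ⟪f', g x⟫) x := hf.inner ℝ hg
  have h2 : (fun y => ⟪f y, g y⟫) = fun _ => c := funext h
  rw [h2] at h1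
  exact h1.unique (hasDerivAt_const x c)

end HasimotoHelpers

noncomputable section Hasimoto
local notation "⟪" x ", " y "⟫" => @inner ℝ _ _ x y

/-- Hasimoto transform: if `γ` solves the vortex filament equation with curvature
`κ` and torsion `τ`, then `ψ = κ·exp(i∫₀ˢ τ)` solves the nonlinear cubic
Schrödinger equation `(1/i)∂ₜψ = ∂ₛₛψ + (1/2)(|ψ|² + A(t))ψ` for some real `A(t)`. -/
theorem hasimoto_transform
    (γ T N B : ℝ → ℝ → EuclideanSpace ℝ (Fin 3)) (κ τ : ℝ → ℝ → ℝ)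
    (ψ : ℝ → ℝ → ℂ)
    (hsmooth : ContDiff ℝ (⊤ : ℕ∞) (fun p : ℝ × ℝ => γ p.1 p.2))
    (hκsmooth : ContDiff ℝ (⊤ : ℕ∞) (fun p : ℝ × ℝ => κ p.1 p.2))
    (hτsmooth : ContDiff ℝ (⊤ : ℕ∞) (fun p : ℝ × ℝ => τ p.1 p.2))
    (hκpos : ∀ s t, 0 < κ s t)
    (hT : ∀ s t, deriv (fun s' => γ s' t) s = T s t)
    (hTunit : ∀ s t, ‖T s t‖ = 1)
    (hNunit : ∀ s t, ‖N s t‖ = 1) (hBunit : ∀ s t, ‖B s t‖ = 1)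
    (hTN : ∀ s t, inner ℝ (T s t) (N s t) = (0 : ℝ))
    (hTB : ∀ s t, inner ℝ (T s t) (B s t) = (0 : ℝ))
    (hNB : ∀ s t, inner ℝ (N s t) (B s t) = (0 : ℝ))
    (hFrenetT : ∀ s t, deriv (fun s' => T s' t) s = κ s t • N s t)
    (hFrenetN : ∀ s t, deriv (fun s' => N s' t) s = -(κ s t) • T s t + τ s t • B s t)
    (hFrenetB : ∀ s t, deriv (fun s' => B s' t) s = -(τ s t) • N s t)
    (hflow : ∀ s t, deriv (fun t' => γ s t') t = κ s t • B s t)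
    (hTt : ∀ s t, deriv (fun t' => T s t') t = deriv (fun s' => κ s' t • B s' t) s)
    (hψ : ∀ s t, ψ s t
      = (κ s t : ℂ) * Complex.exp (Complex.I * ((∫ σ in (0:ℝ)..s, τ σ t : ℝ) : ℂ))) :
    ∃ A : ℝ → ℝ, ∀ s t,
      (1 / Complex.I) * deriv (fun t' => ψ s t') t
        = deriv (fun s' => deriv (fun s'' => ψ s'' t) s') s
          + (1 / 2) * ((‖ψ s t‖ ^ 2 + A t : ℝ) : ℂ) * ψ s t := by
  classical
  set K : ℝ × ℝ → ℝ := fun p => κ p.1 p.2 with hKdef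
  set W : ℝ × ℝ → ℝ := fun p => τ p.1 p.2 with hWdef
  have hKne : ∀ p : ℝ × ℝ, K p ≠ 0 := fun p => ne_of_gt (hκpos p.1 p.2)
  -- the tangent as a smooth function of both variables
  set Tf : ℝ × ℝ → EuclideanSpace ℝ (Fin 3) := pd1 (fun p => γ p.1 p.2) with hTfdef
  have hTfsm : ContDiff ℝ (⊤ : ℕ∞) Tf := contDiff_pd1 hsmooth
  have hTfeq : ∀ s t, Tf (s, t) = T s t := fun s t =>
    ((hasDerivAt_pd1 hsmooth (s, t)).deriv).symm.trans (hT s t)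
  -- ∂ₛT = κ N
  have hpd1Tf : ∀ s t, pd1 Tf (s, t) = κ s t • N s t := fun s t =>
    ((transfer1 hTfsm hTfeq s t).deriv).symm.trans (hFrenetT s t)
  -- the normal as a smooth function
  set Nf : ℝ × ℝ → EuclideanSpace ℝ (Fin 3) := fun p => (K p)⁻¹ • pd1 Tf p with hNfdef
  have hNfsm : ContDiff ℝ (⊤ : ℕ∞) Nf := (hκsmooth.inv hKne).smul (contDiff_pd1 hTfsm)
  have hNfeq : ∀ s t, Nf (s, t) = N s t := by
    intro s t
    show (κ s t)⁻¹ • pd1 Tf (s, t) = N s t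
    rw [hpd1Tf, smul_smul, inv_mul_cancel₀ (ne_of_gt (hκpos s t)), one_smul]
  -- the binormal as a smooth function
  set Bf : ℝ × ℝ → EuclideanSpace ℝ (Fin 3) :=
    fun p => (K p)⁻¹ • pd2 (fun p => γ p.1 p.2) p with hBfdef
  have hBfsm : ContDiff ℝ (⊤ : ℕ∞) Bf := (hκsmooth.inv hKne).smul (contDiff_pd2 hsmooth)
  have hBfeq : ∀ s t, Bf (s, t) = B s t := by
    intro s t
    show (κ s t)⁻¹ • pd2 (fun p => γ p.1 p.2) (s, t) = B s t
    rw [((hasDerivAt_pd2 hsmooth (s, t)).deriv).symm.trans (hflow s t), smul_smul,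
      inv_mul_cancel₀ (ne_of_gt (hκpos s t)), one_smul]
  -- Frenet in pd form
  have hpd1Nf : ∀ s t, pd1 Nf (s, t) = -(κ s t) • T s t + τ s t • B s t := fun s t =>
    ((transfer1 hNfsm hNfeq s t).deriv).symm.trans (hFrenetN s t)
  have hpd1Bf : ∀ s t, pd1 Bf (s, t) = -(τ s t) • N s t := fun s t =>
    ((transfer1 hBfsm hBfeq s t).deriv).symm.trans (hFrenetB s t)
  -- inner product facts
  have hTT : ∀ s t, ⟪T s t, T s t⟫ = 1 := fun s t => by
    rw [real_inner_self_eq_norm_mul_norm, hTunit]; ring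
  have hNN : ∀ s t, ⟪N s t, N s t⟫ = 1 := fun s t => by
    rw [real_inner_self_eq_norm_mul_norm, hNunit]; ring
  have hBB : ∀ s t, ⟪B s t, B s t⟫ = 1 := fun s t => by
    rw [real_inner_self_eq_norm_mul_norm, hBunit]; ring
  have hNT : ∀ s t, ⟪N s t, T s t⟫ = 0 := fun s t => by rw [real_inner_comm]; exact hTN s t
  have hBT : ∀ s t, ⟪B s t, T s t⟫ = 0 := fun s t => by rw [real_inner_comm]; exact hTB s t
  have hBN : ∀ s t, ⟪B s t, N s t⟫ = 0 := fun s t => by rw [real_inner_comm]; exact hNB s t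
  -- ∂ₜT = κₛ B - κτ N
  have hpd2Tf : ∀ s t, pd2 Tf (s, t)
      = pd1 K (s, t) • B s t - (κ s t * τ s t) • N s t := by
    intro s t
    have h1 : HasDerivAt (fun t' => T s t') (pd2 Tf (s, t)) t := transfer2 hTfsm hTfeq s t
    have hκd : HasDerivAt (fun s' => κ s' t) (pd1 K (s, t)) s := hasDerivAt_pd1 hκsmooth (s, t)
    have hBd : HasDerivAt (fun s' => B s' t) (-(τ s t) • N s t) s := by
      have := transfer1 hBfsm hBfeq s t; rwa [hpd1Bf] at this
    have h2 : HasDerivAt (fun s' => κ s' t • B s' t)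
        (κ s t • -(τ s t) • N s t + pd1 K (s, t) • B s t) s := hκd.smul hBd
    rw [← h1.deriv, hTt, h2.deriv, smul_smul, mul_neg, neg_smul, ← sub_eq_neg_add,
      sub_eq_add_neg, ← sub_eq_add_neg]
  -- raw formula for ∂ₜN
  have hNd : ∀ s t, HasDerivAt (fun s' => N s' t) (-(κ s t) • T s t + τ s t • B s t) s := by
    intro s t; have := transfer1 hNfsm hNfeq s t; rwa [hpd1Nf] at this
  have hBd : ∀ s t, HasDerivAt (fun s' => B s' t) (-(τ s t) • N s t) s := by
    intro s t; have := transfer1 hBfsm hBfeq s t; rwa [hpd1Bf] at this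
  have hpd1pd2Tf : ∀ s t, pd1 (pd2 Tf) (s, t)
      = (pd1 K (s, t) • (-(τ s t) • N s t) + pd1 (pd1 K) (s, t) • B s t)
        - ((κ s t * τ s t) • (-(κ s t) • T s t + τ s t • B s t)
            + (pd1 K (s, t) * τ s t + κ s t * pd1 W (s, t)) • N s t) := by
    intro s t
    have hA : HasDerivAt (fun s' => pd1 K (s', t) • B s' t)
        (pd1 K (s, t) • (-(τ s t) • N s t) + pd1 (pd1 K) (s, t) • B s t) s :=
      (hasDerivAt_pd1 (contDiff_pd1 hκsmooth) (s, t)).smul (hBd s t)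
    have hB2 : HasDerivAt (fun s' => (κ s' t * τ s' t) • N s' t)
        ((κ s t * τ s t) • (-(κ s t) • T s t + τ s t • B s t)
          + (pd1 K (s, t) * τ s t + κ s t * pd1 W (s, t)) • N s t) s :=
      ((hasDerivAt_pd1 hκsmooth (s, t)).mul (hasDerivAt_pd1 hτsmooth (s, t))).smul (hNd s t)
    have h4 : HasDerivAt (fun s' => pd2 Tf (s', t)) (pd1 (pd2 Tf) (s, t)) s :=
      hasDerivAt_pd1 (contDiff_pd2 hTfsm) (s, t)
    have he : (fun s' => pd2 Tf (s', t))
        = fun s' => pd1 K (s', t) • B s' t - (κ s' t * τ s' t) • N s' t :=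
      funext fun s' => hpd2Tf s' t
    rw [he] at h4
    exact h4.unique (hA.sub hB2)
  have hpd2Nfraw : ∀ s t, pd2 Nf (s, t)
      = (κ s t)⁻¹ • pd1 (pd2 Tf) (s, t)
        + (-(pd2 K (s, t)) / (κ s t) ^ 2) • pd1 Tf (s, t) := by
    intro s t
    have ha : HasDerivAt (fun t' => (κ s t')⁻¹) (-(pd2 K (s, t)) / (κ s t) ^ 2) t :=
      (hasDerivAt_pd2 hκsmooth (s, t)).inv (hKne (s, t))
    have hb : HasDerivAt (fun t' => pd1 Tf (s, t')) (pd2 (pd1 Tf) (s, t)) t :=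
      hasDerivAt_pd2 (contDiff_pd1 hTfsm) (s, t)
    have hc := ha.smul hb
    have := (hasDerivAt_pd2 hNfsm (s, t)).unique hc
    rw [this, pd_comm hTfsm (s, t)]
  -- the compatibility equation for κₜ
  have hκt : ∀ s t, pd2 K (s, t) = -(2 * pd1 K (s, t) * τ s t + κ s t * pd1 W (s, t)) := by
    intro s t
    have h0 := deriv_inner_const (transfer2 hNfsm hNfeq s t) (transfer2 hNfsm hNfeq s t)
      (fun y => hNN s y)
    rw [real_inner_comm (N s t) (pd2 Nf (s, t))] at h0
    rw [hpd2Nfraw, hpd1pd2Tf, hpd1Tf] at h0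
    simp only [inner_add_right, inner_sub_right, real_inner_smul_right, inner_neg_right,
      hNT s t, hNN s t, hNB s t, real_inner_comm (N s t) (T s t)] at h0
    have hκ := hκpos s t
    field_simp at h0
    have h2 : (κ s t) ^ 2 ≠ 0 := pow_ne_zero 2 hκ.ne'
    have h3 : (-(pd1 K (s, t) * τ s t) - (pd1 K (s, t) * τ s t + κ s t * pd1 W (s, t))
        - pd2 K (s, t)) * κ s t ^ 2 = 0 := by linear_combination (κ s t ^ 2 / 2) * h0
    have h4 := (mul_eq_zero.mp h3).resolve_right h2
    linarith
  -- clean formula ∂ₜN = κτ T + R B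
  set Rf : ℝ × ℝ → ℝ := fun p => pd1 (pd1 K) p / K p - (W p) ^ 2 with hRfdef
  have hRfsm : ContDiff ℝ (⊤ : ℕ∞) Rf :=
    ((contDiff_pd1 (contDiff_pd1 hκsmooth)).div hκsmooth hKne).sub (hτsmooth.pow 2)
  have hpd2Nf : ∀ s t, pd2 Nf (s, t)
      = (κ s t * τ s t) • T s t + Rf (s, t) • B s t := by
    intro s t
    rw [hpd2Nfraw, hpd1pd2Tf, hpd1Tf, hκt]
    show _ = (κ s t * τ s t) • T s t + (pd1 (pd1 K) (s, t) / κ s t - τ s t ^ 2) • B s t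
    have hκ := (hκpos s t).ne'
    match_scalars <;> field_simp <;> ring
  -- ∂ₜB = -κₛ T - R N
  have hpd2Bf : ∀ s t, pd2 Bf (s, t)
      = -(pd1 K (s, t)) • T s t + -(Rf (s, t)) • N s t := by
    intro s t
    have hTd2 := transfer2 hTfsm hTfeq s t
    have hNd2 := transfer2 hNfsm hNfeq s t
    have hBd2 := transfer2 hBfsm hBfeq s t
    -- ⟪T, ∂ₜB⟫ = -κₛ
    have e1 : ⟪T s t, pd2 Bf (s, t)⟫ = -(pd1 K (s, t)) := by
      have h0 := deriv_inner_const hTd2 hBd2 (fun y => hTB s y)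
      rw [hpd2Tf] at h0
      simp only [inner_sub_left, real_inner_smul_left, hBB s t, hNB s t] at h0
      linarith
    -- ⟪N, ∂ₜB⟫ = -R
    have e2 : ⟪N s t, pd2 Bf (s, t)⟫ = -(Rf (s, t)) := by
      have h0 := deriv_inner_const hNd2 hBd2 (fun y => hNB s y)
      rw [hpd2Nf] at h0
      simp only [inner_add_left, real_inner_smul_left, hTB s t, hBB s t,
        real_inner_comm (N s t) (B s t), hNB s t] at h0 ⊢
      linarith
    -- ⟪B, ∂ₜB⟫ = 0
    have e3 : ⟪B s t, pd2 Bf (s, t)⟫ = 0 := by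
      have h0 := deriv_inner_const hBd2 hBd2 (fun y => hBB s y)
      have h1 : ⟪B s t, pd2 Bf (s, t)⟫ = ⟪pd2 Bf (s, t), B s t⟫ := real_inner_comm _ _
      linarith [h0, h1]
    have := expand_basis (hTunit s t) (hNunit s t) (hBunit s t) (hTN s t) (hTB s t) (hNB s t)
      (pd2 Bf (s, t))
    rw [e1, e2, e3, zero_smul, add_zero, neg_smul, neg_smul, ← neg_smul, ← neg_smul] at this
    exact this
  -- ∂ₛ(∂ₜN)
  have hpd1pd2Nf : ∀ s t, pd1 (pd2 Nf) (s, t)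
      = ((κ s t * τ s t) • (κ s t • N s t)
          + (pd1 K (s, t) * τ s t + κ s t * pd1 W (s, t)) • T s t)
        + (Rf (s, t) • (-(τ s t) • N s t) + pd1 Rf (s, t) • B s t) := by
    intro s t
    have hTd : HasDerivAt (fun s' => T s' t) (κ s t • N s t) s := by
      have := transfer1 hTfsm hTfeq s t; rwa [hpd1Tf] at this
    have hA : HasDerivAt (fun s' => (κ s' t * τ s' t) • T s' t)
        ((κ s t * τ s t) • (κ s t • N s t)
          + (pd1 K (s, t) * τ s t + κ s t * pd1 W (s, t)) • T s t) s :=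
      ((hasDerivAt_pd1 hκsmooth (s, t)).mul (hasDerivAt_pd1 hτsmooth (s, t))).smul hTd
    have hB2 : HasDerivAt (fun s' => Rf (s', t) • B s' t)
        (Rf (s, t) • (-(τ s t) • N s t) + pd1 Rf (s, t) • B s t) s :=
      (hasDerivAt_pd1 hRfsm (s, t)).smul (hBd s t)
    have h4 : HasDerivAt (fun s' => pd2 Nf (s', t)) (pd1 (pd2 Nf) (s, t)) s :=
      hasDerivAt_pd1 (contDiff_pd2 hNfsm) (s, t)
    have he : (fun s' => pd2 Nf (s', t))
        = fun s' => (κ s' t * τ s' t) • T s' t + Rf (s', t) • B s' t :=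
      funext fun s' => hpd2Nf s' t
    rw [he] at h4
    exact h4.unique (hA.add hB2)
  -- evolution of the torsion
  have hτt : ∀ s t, HasDerivAt (fun t' => τ s t')
      (pd1 Rf (s, t) + κ s t * pd1 K (s, t)) t := by
    intro s t
    have τeq : ∀ y, ⟪pd1 Nf (s, y), Bf (s, y)⟫ = τ s y := by
      intro y
      rw [hpd1Nf, hBfeq]
      simp only [inner_add_left, real_inner_smul_left, hTB s y, hBB s y]
      ring
    have hInner : HasDerivAt (fun t' => ⟪pd1 Nf (s, t'), Bf (s, t')⟫)
        (⟪pd1 Nf (s, t), pd2 Bf (s, t)⟫ + ⟪pd2 (pd1 Nf) (s, t), Bf (s, t)⟫) t :=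
      (hasDerivAt_pd2 (contDiff_pd1 hNfsm) (s, t)).inner ℝ (hasDerivAt_pd2 hBfsm (s, t))
    have he : (fun t' => ⟪pd1 Nf (s, t'), Bf (s, t')⟫) = fun t' => τ s t' :=
      funext fun y => τeq y
    rw [he] at hInner
    have hv : ⟪pd1 Nf (s, t), pd2 Bf (s, t)⟫ + ⟪pd2 (pd1 Nf) (s, t), Bf (s, t)⟫
        = pd1 Rf (s, t) + κ s t * pd1 K (s, t) := by
      rw [hpd1Nf, hpd2Bf, ← pd_comm hNfsm (s, t), hpd1pd2Nf, hBfeq]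
      simp only [inner_add_left, inner_add_right, real_inner_smul_left, real_inner_smul_right,
        hTT s t, hNT s t, hBT s t, hTB s t, hNB s t, hBN s t, hTN s t, hNN s t, hBB s t]
      ring
    rw [hv] at hInner
    exact hInner
  -- the function g = R + κ²/2 whose s-derivative is τₜ
  set g : ℝ × ℝ → ℝ := fun p => Rf p + (K p) ^ 2 / 2 with hgdef
  have hgsm : ContDiff ℝ (⊤ : ℕ∞) g := hRfsm.add ((hκsmooth.pow 2).div_const 2)
  have hpd1g : ∀ s t, pd1 g (s, t) = pd1 Rf (s, t) + κ s t * pd1 K (s, t) := by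
    intro s t
    have h2 : HasDerivAt (fun s' => (κ s' t) ^ 2 / 2) (κ s t * pd1 K (s, t)) s := by
      have := ((hasDerivAt_pd1 hκsmooth (s, t)).fun_pow 2).div_const 2
      refine this.congr_deriv ?_
      ring
    have hA : HasDerivAt (fun s' => Rf (s', t) + (κ s' t) ^ 2 / 2)
        (pd1 Rf (s, t) + κ s t * pd1 K (s, t)) s :=
      (hasDerivAt_pd1 hRfsm (s, t)).add h2
    exact (hasDerivAt_pd1 hgsm (s, t)).unique hA
  have hτt' : ∀ s t, HasDerivAt (fun t' => τ s t') (pd1 g (s, t)) t := by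
    intro s t; rw [hpd1g]; exact hτt s t
  -- the phase function
  set θ : ℝ → ℝ → ℝ := fun s t => ∫ σ in (0:ℝ)..s, τ σ t with hθdef
  have hcτ : ∀ t, Continuous fun σ => τ σ t := by
    intro t
    exact hτsmooth.continuous.comp (continuous_id.prodMk continuous_const)
  have hθs : ∀ s t, HasDerivAt (fun s' => θ s' t) (τ s t) s := fun s t =>
    ((hcτ t).integral_hasStrictDerivAt 0 s).hasDerivAt
  have hθt : ∀ s t, HasDerivAt (fun t' => θ s t') (g (s, t) - g (0, t)) t := by
    intro s t
    have hcont : Continuous (pd2 W) := (contDiff_pd2 hτsmooth).continuous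
    have hKc : IsCompact ((Set.uIcc (0:ℝ) s) ×ˢ (Set.Icc (t-1) (t+1))) :=
      isCompact_uIcc.prod isCompact_Icc
    obtain ⟨M, hM⟩ := hKc.exists_bound_of_continuousOn hcont.continuousOn
    have key := intervalIntegral.hasDerivAt_integral_of_dominated_loc_of_deriv_le
      (F := fun x σ => τ σ x) (F' := fun x σ => pd2 W (σ, x)) (x₀ := t) (a := 0) (b := s)
      (bound := fun _ => M) (μ := MeasureTheory.volume) (Metric.ball_mem_nhds t one_pos)
      (Filter.Eventually.of_forall fun x => ((hcτ x).aestronglyMeasurable))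
      (((hcτ t)).intervalIntegrable 0 s)
      ((hcont.comp (continuous_id.prodMk continuous_const)).aestronglyMeasurable)
      (MeasureTheory.ae_of_all _ (fun σ hσ x hx => by
        refine hM (σ, x) ⟨Set.Ioc_subset_Icc_self hσ, ?_⟩
        have := Metric.mem_ball.mp hx
        rw [Real.dist_eq] at this
        constructor <;> [linarith [abs_lt.mp this]; linarith [abs_lt.mp this]]))
      intervalIntegrable_const
      (MeasureTheory.ae_of_all _ (fun σ _ x _ => hasDerivAt_pd2 hτsmooth (σ, x)))
    have heq : (∫ σ in (0:ℝ)..s, pd2 W (σ, t)) = g (s, t) - g (0, t) := by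
      have h5 : ∀ σ, pd2 W (σ, t) = pd1 g (σ, t) := fun σ =>
        (hasDerivAt_pd2 hτsmooth (σ, t)).unique (hτt' σ t)
      rw [intervalIntegral.integral_congr (fun σ _ => h5 σ)]
      exact intervalIntegral.integral_eq_sub_of_hasDerivAt
        (f := fun σ => g (σ, t)) (f' := fun σ => pd1 g (σ, t))
        (fun σ _ => hasDerivAt_pd1 hgsm (σ, t))
        (((contDiff_pd1 hgsm).continuous.comp
          (continuous_id.prodMk continuous_const)).intervalIntegrable 0 s)
    have := key.2
    rwa [heq] at this
  -- time derivative of ψ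
  have hψt : ∀ s t, HasDerivAt (fun t' => ψ s t')
      (((pd2 K (s, t) : ℝ) : ℂ) * Complex.exp (Complex.I * ((θ s t : ℝ) : ℂ))
        + ((κ s t : ℝ) : ℂ) * (Complex.exp (Complex.I * ((θ s t : ℝ) : ℂ))
            * (Complex.I * ((g (s, t) - g (0, t) : ℝ) : ℂ)))) t := by
    intro s t
    have he : (fun t' => ψ s t')
        = fun t' => ((κ s t' : ℝ) : ℂ) * Complex.exp (Complex.I * ((θ s t' : ℝ) : ℂ)) :=
      funext fun y => hψ s y
    rw [he]
    have h1 : HasDerivAt (fun t' => ((κ s t' : ℝ) : ℂ)) ((pd2 K (s, t) : ℝ) : ℂ) t :=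
      (hasDerivAt_pd2 hκsmooth (s, t)).ofReal_comp
    have h3 : HasDerivAt (fun t' => Complex.exp (Complex.I * ((θ s t' : ℝ) : ℂ)))
        (Complex.exp (Complex.I * ((θ s t : ℝ) : ℂ))
          * (Complex.I * ((g (s, t) - g (0, t) : ℝ) : ℂ))) t := by
      have h2 : HasDerivAt (fun t' => Complex.I * ((θ s t' : ℝ) : ℂ))
          (Complex.I * ((g (s, t) - g (0, t) : ℝ) : ℂ)) t :=
        ((hθt s t).ofReal_comp).const_mul Complex.I
      exact h2.cexp
    exact h1.mul h3
  -- space derivative of ψ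
  have hψs : ∀ s t, HasDerivAt (fun s'' => ψ s'' t)
      (((pd1 K (s, t) : ℝ) : ℂ) * Complex.exp (Complex.I * ((θ s t : ℝ) : ℂ))
        + ((κ s t : ℝ) : ℂ) * (Complex.exp (Complex.I * ((θ s t : ℝ) : ℂ))
            * (Complex.I * ((τ s t : ℝ) : ℂ)))) s := by
    intro s t
    have he : (fun s'' => ψ s'' t)
        = fun s'' => ((κ s'' t : ℝ) : ℂ) * Complex.exp (Complex.I * ((θ s'' t : ℝ) : ℂ)) :=
      funext fun y => hψ y t
    rw [he]
    have h1 : HasDerivAt (fun s'' => ((κ s'' t : ℝ) : ℂ)) ((pd1 K (s, t) : ℝ) : ℂ) s :=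
      (hasDerivAt_pd1 hκsmooth (s, t)).ofReal_comp
    have h3 : HasDerivAt (fun s'' => Complex.exp (Complex.I * ((θ s'' t : ℝ) : ℂ)))
        (Complex.exp (Complex.I * ((θ s t : ℝ) : ℂ)) * (Complex.I * ((τ s t : ℝ) : ℂ))) s :=
      (((hθs s t).ofReal_comp).const_mul Complex.I).cexp
    exact h1.mul h3
  -- second space derivative of ψ
  have hψss : ∀ s t, HasDerivAt (fun s' => deriv (fun s'' => ψ s'' t) s')
      ((((pd1 (pd1 K) (s, t) : ℝ) : ℂ)
          * Complex.exp (Complex.I * ((θ s t : ℝ) : ℂ))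
        + ((pd1 K (s, t) : ℝ) : ℂ) * (Complex.exp (Complex.I * ((θ s t : ℝ) : ℂ))
            * (Complex.I * ((τ s t : ℝ) : ℂ))))
       + ((((pd1 K (s, t) * τ s t + κ s t * pd1 W (s, t) : ℝ) : ℂ) * Complex.I)
          * Complex.exp (Complex.I * ((θ s t : ℝ) : ℂ))
        + (((κ s t * τ s t : ℝ) : ℂ) * Complex.I)
            * (Complex.exp (Complex.I * ((θ s t : ℝ) : ℂ))
              * (Complex.I * ((τ s t : ℝ) : ℂ))))) s := by
    intro s t
    have he : (fun s' => deriv (fun s'' => ψ s'' t) s')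
        = fun s' => ((pd1 K (s', t) : ℝ) : ℂ)
              * Complex.exp (Complex.I * ((θ s' t : ℝ) : ℂ))
            + (((κ s' t * τ s' t : ℝ) : ℂ) * Complex.I)
              * Complex.exp (Complex.I * ((θ s' t : ℝ) : ℂ)) := by
      funext s'
      rw [(hψs s' t).deriv]
      push_cast
      ring
    rw [he]
    have ha : HasDerivAt (fun s' => ((pd1 K (s', t) : ℝ) : ℂ))
        ((pd1 (pd1 K) (s, t) : ℝ) : ℂ) s :=
      (hasDerivAt_pd1 (contDiff_pd1 hκsmooth) (s, t)).ofReal_comp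
    have hb : HasDerivAt (fun s' => (((κ s' t * τ s' t : ℝ) : ℂ) * Complex.I))
        (((pd1 K (s, t) * τ s t + κ s t * pd1 W (s, t) : ℝ) : ℂ) * Complex.I) s :=
      (((hasDerivAt_pd1 hκsmooth (s, t)).mul
        (hasDerivAt_pd1 hτsmooth (s, t))).ofReal_comp).mul_const Complex.I
    have hc : HasDerivAt (fun s' => Complex.exp (Complex.I * ((θ s' t : ℝ) : ℂ)))
        (Complex.exp (Complex.I * ((θ s t : ℝ) : ℂ)) * (Complex.I * ((τ s t : ℝ) : ℂ))) s :=
      (((hθs s t).ofReal_comp).const_mul Complex.I).cexp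
    exact (ha.mul hc).add (hb.mul hc)
  -- the norm of ψ
  have hψnorm : ∀ s t, ‖ψ s t‖ ^ 2 = κ s t ^ 2 := by
    intro s t
    rw [hψ]
    rw [norm_mul, Complex.norm_real,
      Complex.norm_exp]
    simp [abs_of_pos (hκpos s t)]
  -- conclusion
  refine ⟨fun t => -(2 * g (0, t)), fun s t => ?_⟩
  rw [(hψt s t).deriv, (hψss s t).deriv, hψnorm s t, hψ s t]
  have hgs : g (s, t) = pd1 (pd1 K) (s, t) / κ s t - τ s t ^ 2 + κ s t ^ 2 / 2 := rfl
  rw [hκt]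
  rw [show ((∫ σ in (0:ℝ)..s, τ σ t : ℝ) : ℂ) = ((θ s t : ℝ) : ℂ) from rfl]
  rw [one_div, Complex.inv_I]
  have hrelR : κ s t * g (s, t)
      = pd1 (pd1 K) (s, t) - κ s t * τ s t ^ 2 + κ s t ^ 3 / 2 := by
    rw [hgs]
    field_simp [(hκpos s t).ne']
  have hrel : ((κ s t : ℝ) : ℂ) * ((g (s, t) : ℝ) : ℂ)
      = ((pd1 (pd1 K) (s, t) : ℝ) : ℂ) - ((κ s t : ℝ) : ℂ) * ((τ s t : ℝ) : ℂ) ^ 2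
        + ((κ s t : ℝ) : ℂ) ^ 3 / 2 := by
    have := congrArg (fun x : ℝ => (x : ℂ)) hrelR
    push_cast at this
    exact this
  push_cast
  linear_combination (norm := ring_nf)
    ((-(Complex.I ^ 2)) * Complex.exp (Complex.I * ((θ s t : ℝ) : ℂ))) * hrel
    + ((((κ s t : ℝ) : ℂ) * ((g (0, t) : ℝ) : ℂ) - ((pd1 (pd1 K) (s, t) : ℝ) : ℂ)
        - ((κ s t : ℝ) : ℂ) ^ 3 / 2)
        * Complex.exp (Complex.I * ((θ s t : ℝ) : ℂ))) * Complex.I_sq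

end Hasimoto
end

section
/- If z : (α,β) → ℝ is smooth and satisfies x = -z''(x)·(1 + C₁² + z'(x)²)^{-3/2}, then there is a constant C₂ such that -z'(x)/√(1 + C₁² + z'(x)²) = (1/2)(1 + C₁²)(x² + 2C₂) for all x in (α,β). -/
open Real Set

/-- First integral of the rotating-filament ODE: if
`x = -z''(x)(1 + C₁² + z'(x)²)^{-3/2}` on an interval, then there is a constant `C₂`
with `-z'(x)/√(1 + C₁² + z'(x)²) = (1/2)(1 + C₁²)(x² + 2C₂)`. -/
theorem vfe_rotating_ode_first_integral
    (α β C₁ : ℝ) (z : ℝ → ℝ)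
    (hz : ContDiffOn ℝ (⊤ : ℕ∞) z (Ioo α β))
    (hode : ∀ x ∈ Ioo α β,
      x = -(deriv (deriv z) x) * (1 + C₁ ^ 2 + (deriv z x) ^ 2) ^ (-(3 / 2) : ℝ)) :
    ∃ C₂ : ℝ, ∀ x ∈ Ioo α β,
      -(deriv z x) / Real.sqrt (1 + C₁ ^ 2 + (deriv z x) ^ 2)
        = (1 / 2) * (1 + C₁ ^ 2) * (x ^ 2 + 2 * C₂) := by
  by_cases hab : α < β
  swap
  · exact ⟨0, fun x hx => absurd (hx.1.trans hx.2) hab⟩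
  obtain ⟨x₀, hx₀⟩ := nonempty_Ioo.mpr hab
  set s := Ioo α β with hs_def
  have hs : IsOpen s := isOpen_Ioo
  have hf : ContDiffOn ℝ (⊤ : ℕ∞) (deriv z) s := hz.deriv_of_isOpen hs (by simp)
  set g : ℝ → ℝ := fun x =>
    -(deriv z x) / Real.sqrt (1 + C₁ ^ 2 + (deriv z x) ^ 2)
      - (1 / 2) * (1 + C₁ ^ 2) * x ^ 2 with hg_def
  have key : ∀ x ∈ s, HasDerivAt g 0 x := by
    intro x hx
    have hw : (0 : ℝ) < 1 + C₁ ^ 2 + (deriv z x) ^ 2 := by positivity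
    have hderf : HasDerivAt (deriv z) (deriv (deriv z) x) x :=
      ((hf.differentiableOn (by simp)).differentiableAt (hs.mem_nhds hx)).hasDerivAt
    set a := deriv z x with ha
    set b := deriv (deriv z) x with hb
    set w := 1 + C₁ ^ 2 + a ^ 2 with hw_def
    have hsw : Real.sqrt w ≠ 0 := Real.sqrt_ne_zero'.mpr hw
    have hsq2 : Real.sqrt w ^ 2 = w := Real.sq_sqrt hw.le
    have h1 : HasDerivAt (fun y => 1 + C₁ ^ 2 + (deriv z y) ^ 2) (2 * a * b) x := by
      have := ((hderf.pow 2).const_add (1 + C₁ ^ 2))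
      refine this.congr_deriv (Eq.symm ?_)
      ring
    have hsq : HasDerivAt (fun y => Real.sqrt (1 + C₁ ^ 2 + (deriv z y) ^ 2))
        (a * b / Real.sqrt w) x := by
      have := (Real.hasDerivAt_sqrt hw.ne').comp x h1
      refine this.congr_deriv (Eq.symm ?_)
      field_simp
    have hquot : HasDerivAt (fun y => -(deriv z y) / Real.sqrt (1 + C₁ ^ 2 + (deriv z y) ^ 2))
        (((-b) * Real.sqrt w - (-a) * (a * b / Real.sqrt w)) / (Real.sqrt w) ^ 2) x :=
      (hderf.neg.div hsq hsw)
    have hpoly : HasDerivAt (fun y : ℝ => (1 / 2) * (1 + C₁ ^ 2) * y ^ 2)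
        ((1 + C₁ ^ 2) * x) x := by
      have := ((hasDerivAt_pow 2 x).const_mul ((1 / 2) * (1 + C₁ ^ 2)))
      refine this.congr_deriv (Eq.symm ?_)
      push_cast
      ring
    have := hquot.sub hpoly
    refine this.congr_deriv (Eq.symm ?_)
    -- show 0 = D - (1+C₁²)x
    have hrpow : w ^ (-(3 / 2) : ℝ) = 1 / (w * Real.sqrt w) := by
      rw [Real.rpow_neg hw.le, show ((3 : ℝ) / 2) = 1 + 1 / 2 by norm_num,
        Real.rpow_add hw, Real.rpow_one, ← Real.sqrt_eq_rpow]
      field_simp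
    have hx' := hode x hx
    rw [← ha, ← hb, ← hw_def, hrpow] at hx'
    have hwne : w ≠ 0 := hw.ne'
    field_simp at hx' ⊢
    linear_combination (b + (1 + C₁ ^ 2) * x * Real.sqrt w) * hsq2 + (1 + C₁ ^ 2) * hx' + b * hw_def
  have hdiff : DifferentiableOn ℝ g s := fun x hx =>
    ((key x hx).differentiableAt).differentiableWithinAt
  have hfd : ∀ x ∈ s, fderivWithin ℝ g s x = 0 := by
    intro x hx
    rw [fderivWithin_of_isOpen hs hx, (key x hx).hasFDerivAt.fderiv]
    ext
    simp
  have hconst : ∀ x ∈ s, g x = g x₀ := fun x hx =>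
    (convex_Ioo α β).is_const_of_fderivWithin_eq_zero hdiff hfd hx hx₀
  have hC : (1 : ℝ) + C₁ ^ 2 ≠ 0 := by positivity
  refine ⟨g x₀ / (1 + C₁ ^ 2), fun x hx => ?_⟩
  have h2 : -(deriv z x) / Real.sqrt (1 + C₁ ^ 2 + (deriv z x) ^ 2)
      = g x₀ + (1 / 2) * (1 + C₁ ^ 2) * x ^ 2 := by
    rw [← hconst x hx]
    simp only [hg_def]
    ring
  rw [h2]
  field_simp
  ring
end

section
/- The curve Γ(x,t) = (x, cos(t)·f(x), -sin(t)·f(x)) satisfies the vortex filament equation ∂_t Γ = ∂_s Γ × ∂_ss Γ (with s arclength) if and only if f satisfies f(x) + f''(x)/(1 + f'(x)²)^{3/2} = 0. -/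
open Real Set

private lemma hasDerivAt_vec3 {g0 g1 g2 : ℝ → ℝ} {d0 d1 d2 x : ℝ}
    (h0 : HasDerivAt g0 d0 x) (h1 : HasDerivAt g1 d1 x) (h2 : HasDerivAt g2 d2 x) :
    HasDerivAt (fun y => ![g0 y, g1 y, g2 y]) ![d0, d1, d2] x := by
  rw [hasDerivAt_pi]
  intro i
  fin_cases i
  exacts [by simpa using h0, by simpa using h1, by simpa using h2]

/-- The rotating planar curve `Γ(x,t) = (x, cos t·f(x), -sin t·f(x))` solves the
vortex filament equation `∂ₜΓ = ∂ₛΓ × ∂ₛₛΓ` (where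
`∂ₛΓ × ∂ₛₛΓ = (∂ₓΓ × ∂ₓₓΓ)/|∂ₓΓ|³` and `|∂ₓΓ|² = 1 + f'(x)²`) if and only if
`f(x) + f''(x)/(1 + f'(x)²)^{3/2} = 0`. -/
theorem planar_rotating_filament_iff_ode
    (α β : ℝ) (f : ℝ → ℝ)
    (hf : ContDiffOn ℝ (⊤ : ℕ∞) f (Ioo α β))
    (Γ : ℝ → ℝ → Fin 3 → ℝ)
    (hΓ : ∀ x t, Γ x t = ![x, Real.cos t * f x, -(Real.sin t * f x)]) :
    (∀ x ∈ Ioo α β, ∀ t : ℝ,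
      deriv (fun t' => Γ x t') t
        = ((1 + (deriv f x) ^ 2) ^ (-(3 / 2) : ℝ))
            • crossProduct (deriv (fun x' => Γ x' t) x)
                (deriv (fun x' => deriv (fun x'' => Γ x'' t) x') x))
    ↔ ∀ x ∈ Ioo α β,
        f x + deriv (deriv f) x / (1 + (deriv f x) ^ 2) ^ ((3 / 2) : ℝ) = 0 := by
  have hopen : IsOpen (Ioo α β) := isOpen_Ioo
  have hdf : ContDiffOn ℝ (⊤ : ℕ∞) (deriv f) (Ioo α β) := by
    have := hf.deriv_of_isOpen hopen (m := (⊤ : ℕ∞)) (by simp)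
    simpa using this
  -- derivative of f at points of Ioo
  have hfd : ∀ x ∈ Ioo α β, HasDerivAt f (deriv f x) x := by
    intro x hx
    exact ((hf.differentiableOn (by simp)).differentiableAt
      (hopen.mem_nhds hx)).hasDerivAt
  have hfd2 : ∀ x ∈ Ioo α β, HasDerivAt (deriv f) (deriv (deriv f) x) x := by
    intro x hx
    exact ((hdf.differentiableOn (by simp)).differentiableAt
      (hopen.mem_nhds hx)).hasDerivAt
  -- key computation of all three deriv terms
  have key : ∀ x ∈ Ioo α β, ∀ t : ℝ,
      deriv (fun t' => Γ x t') t = ![0, -(Real.sin t * f x), -(Real.cos t * f x)] ∧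
      deriv (fun x' => Γ x' t) x = ![1, Real.cos t * deriv f x, -(Real.sin t * deriv f x)] ∧
      deriv (fun x' => deriv (fun x'' => Γ x'' t) x') x
        = ![0, Real.cos t * deriv (deriv f) x, -(Real.sin t * deriv (deriv f) x)] := by
    intro x hx t
    refine ⟨?_, ?_, ?_⟩
    · have : HasDerivAt (fun t' => Γ x t')
          ![0, -(Real.sin t * f x), -(Real.cos t * f x)] t := by
        have h := hasDerivAt_vec3 (g0 := fun _ : ℝ => x)
          (g1 := fun t' => Real.cos t' * f x) (g2 := fun t' => -(Real.sin t' * f x))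
          (hasDerivAt_const t x)
          (by simpa using (Real.hasDerivAt_cos t).mul_const (f x))
          (by simpa using ((Real.hasDerivAt_sin t).mul_const (f x)).fun_neg)
        simpa [hΓ, neg_mul] using h
      exact this.deriv
    · have : HasDerivAt (fun x' => Γ x' t)
          ![1, Real.cos t * deriv f x, -(Real.sin t * deriv f x)] x := by
        have h := hasDerivAt_vec3 (g0 := fun x' : ℝ => x')
          (g1 := fun x' => Real.cos t * f x') (g2 := fun x' => -(Real.sin t * f x'))
          (hasDerivAt_id x)
          ((hfd x hx).const_mul (Real.cos t))
          (((hfd x hx).const_mul (Real.sin t)).neg)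
        simpa [hΓ] using h
      exact this.deriv
    · have hinner : ∀ x' ∈ Ioo α β, deriv (fun x'' => Γ x'' t) x'
          = ![1, Real.cos t * deriv f x', -(Real.sin t * deriv f x')] := by
        intro x' hx'
        have h := hasDerivAt_vec3 (g0 := fun y : ℝ => y)
          (g1 := fun y => Real.cos t * f y) (g2 := fun y => -(Real.sin t * f y))
          (hasDerivAt_id x')
          ((hfd x' hx').const_mul (Real.cos t))
          (((hfd x' hx').const_mul (Real.sin t)).neg)
        have h' : HasDerivAt (fun x'' => Γ x'' t)
            ![1, Real.cos t * deriv f x', -(Real.sin t * deriv f x')] x' := by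
          simpa [hΓ] using h
        exact h'.deriv
      have hv : HasDerivAt (fun x' => ![(1:ℝ), Real.cos t * deriv f x',
            -(Real.sin t * deriv f x')])
          ![0, Real.cos t * deriv (deriv f) x, -(Real.sin t * deriv (deriv f) x)] x :=
        hasDerivAt_vec3 (hasDerivAt_const x 1)
          ((hfd2 x hx).const_mul (Real.cos t))
          (((hfd2 x hx).const_mul (Real.sin t)).neg)
      have heq : (fun x' => deriv (fun x'' => Γ x'' t) x')
          =ᶠ[nhds x] fun x' => ![(1:ℝ), Real.cos t * deriv f x',
            -(Real.sin t * deriv f x')] := by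
        filter_upwards [hopen.mem_nhds hx] with x' hx' using hinner x' hx'
      exact (hv.congr_of_eventuallyEq heq).deriv
  have hKpos : ∀ x : ℝ, (0:ℝ) < 1 + (deriv f x) ^ 2 := fun x => by positivity
  have hKinv : ∀ x : ℝ, ((1 + (deriv f x) ^ 2) ^ (-(3 / 2) : ℝ))
      = ((1 + (deriv f x) ^ 2) ^ ((3 / 2) : ℝ))⁻¹ := fun x => by
    rw [Real.rpow_neg (hKpos x).le]
  constructor
  · intro H x hx
    have h := H x hx (Real.pi / 2)
    obtain ⟨h1, h2, h3⟩ := key x hx (Real.pi / 2)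
    rw [h1, h2, h3] at h
    have hc := congrFun h 1
    simp [cross_apply, Real.sin_pi_div_two, Real.cos_pi_div_two, hKinv x] at hc
    have hK3 : (0:ℝ) < (1 + (deriv f x) ^ 2) ^ ((3 / 2) : ℝ) :=
      Real.rpow_pos_of_pos (hKpos x) _
    field_simp at hc ⊢
    linarith
  · intro H x hx t
    obtain ⟨h1, h2, h3⟩ := key x hx t
    rw [h1, h2, h3]
    have hode := H x hx
    have hK3 : (0:ℝ) < (1 + (deriv f x) ^ 2) ^ ((3 / 2) : ℝ) :=
      Real.rpow_pos_of_pos (hKpos x) _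
    have hfx : f x = -(deriv (deriv f) x / (1 + (deriv f x) ^ 2) ^ ((3 / 2) : ℝ)) := by
      linarith
    funext i
    fin_cases i
    · simp [cross_apply, hKinv x, hfx, smul_eq_mul]
      right; ring
    · simp [cross_apply, hKinv x, hfx, smul_eq_mul]
      ring
    · simp [cross_apply, hKinv x, hfx, smul_eq_mul]
      ring
end
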